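/- For the unit square [0,1]² with reference point x₀ = (1/2, 1/2), normal n(φ) = (cos φ, sin φ), and prescribed area fraction α* > 1/2, the signed distance s*(φ) solving the area constraint is given piecewise by s*(φ) = (α* − 1/2)cos φ for φ ∈ [0, φ′] and s*(φ) = (sin φ + cos φ)/2 − √(2(1−α*) cos φ sin φ) for φ ∈ (φ′, π/4], where tan φ′ = 2(1−α*); moreover s*(·) is continuously differentiable at φ = φ′. -/

import Mathlib

/-!
For `cos φ > 0` the part of the square below the line has, at height `y`, width
`(t + (cos φ + sin φ) / 2 - y sin φ) / cos φ` clamped to `[0, 1]`, so its area is the integral of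
that clamped width. While strictly between `0` and `1`, this area is strictly increasing in the
offset `t`, so the constraint determines `s*(φ)`, and it suffices to check that the two formulas
have area `α*` in their regimes. At `φ′`, where `sin φ′ = 2 (1 - α*) cos φ′`, the line passes
through the corner `(1, 0)` and the two formulas agree to first order, so gluing them gives `C¹`.
-/

open MeasureTheory Real Set Filter

def unitClamp (x : ℝ) : ℝ := max 0 (min 1 x)

theorem monotone_unitClamp : Monotone unitClamp :=
  fun _ _ h => max_le_max le_rfl (min_le_min le_rfl h)

theorem continuous_unitClamp : Continuous unitClamp := by
  unfold unitClamp; fun_prop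

theorem unitClamp_nonneg (x : ℝ) : 0 ≤ unitClamp x := le_max_left _ _

theorem unitClamp_of_one_le {x : ℝ} (h : 1 ≤ x) : unitClamp x = 1 := by
  simp [unitClamp, h]

theorem unitClamp_of_nonpos {x : ℝ} (h : x ≤ 0) : unitClamp x = 0 := by
  simp [unitClamp, min_le_of_right_le h]

theorem unitClamp_of_mem_Icc {x : ℝ} (hx : x ∈ Icc 0 1) : unitClamp x = x := by
  simp [unitClamp, hx.1, hx.2]

theorem unitClamp_lt_unitClamp {x y : ℝ} (hxy : x < y) (hx : x < 1) (hy : 0 < y) :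
    unitClamp x < unitClamp y := by
  simp only [unitClamp]
  rcases le_or_gt x 0 with hx0 | hx0
  · rw [max_eq_left (min_le_of_right_le hx0)]
    exact lt_max_of_lt_right (lt_min one_pos hy)
  · rw [max_eq_right (le_min zero_le_one hx0.le), min_eq_right hx.le]
    exact lt_max_of_lt_right (lt_min hx hxy)

theorem integral_unitClamp_lt_integral_unitClamp {u v : ℝ → ℝ} {a b : ℝ} (hab : a < b)
    (hu : Continuous u) (hv : Continuous v) (huv : ∀ y ∈ Icc a b, u y < v y)
    (hu1 : ∫ y in a..b, unitClamp (u y) < b - a) (hv0 : 0 < ∫ y in a..b, unitClamp (v y)) :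
    ∫ y in a..b, unitClamp (u y) < ∫ y in a..b, unitClamp (v y) := by
  have hIcc : uIcc a b = Icc a b := uIcc_of_le hab.le
  have hu_lt : (Icc a b ∩ {y | u y < 1}).Nonempty := by
    by_contra! h
    have : ∀ y ∈ uIcc a b, unitClamp (u y) = 1 := fun y hy =>
      unitClamp_of_one_le (not_lt.1 fun hy' => h.subset ⟨hIcc ▸ hy, hy'⟩)
    simp [intervalIntegral.integral_congr this] at hu1
  have hv_pos : (Icc a b ∩ {y | 0 < v y}).Nonempty := by
    by_contra! h
    have : ∀ y ∈ uIcc a b, unitClamp (v y) = 0 := fun y hy =>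
      unitClamp_of_nonpos (not_lt.1 fun hy' => h.subset ⟨hIcc ▸ hy, hy'⟩)
    simp [intervalIntegral.integral_congr this] at hv0
  have hcover : Icc a b ⊆ {y | u y < 1} ∪ {y | 0 < v y} := fun y hy =>
    (lt_or_ge (u y) 1).imp id fun h => zero_lt_one.trans_le h |>.trans (huv y hy)
  -- `{u < 1}` and `{0 < v}` are open, cover `[a, b]` and both meet it, so they meet inside it.
  obtain ⟨y, hy, hyu, hyv⟩ := isPreconnected_Icc _ _ (isOpen_lt hu continuous_const)
    (isOpen_lt continuous_const hv) hcover hu_lt hv_pos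
  exact intervalIntegral.integral_lt_integral_of_continuousOn_of_le_of_exists_lt hab
    (continuous_unitClamp.comp hu).continuousOn (continuous_unitClamp.comp hv).continuousOn
    (fun y hy => monotone_unitClamp (huv y (Ioc_subset_Icc_self hy)).le)
    ⟨y, hy, unitClamp_lt_unitClamp (huv y hy) hyu hyv⟩

theorem integral_sub_mul_div (K s c α β : ℝ) :
    ∫ y in α..β, (K - s * y) / c = (K * (β - α) - s * (β ^ 2 - α ^ 2) / 2) / c := by
  rw [intervalIntegral.integral_div, intervalIntegral.integral_sub intervalIntegrable_const
      (intervalIntegral.intervalIntegrable_id.const_mul s), intervalIntegral.integral_const_mul,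
    integral_id, intervalIntegral.integral_const, smul_eq_mul]
  ring

noncomputable def squareCutArea (c s t : ℝ) : ℝ :=
  (volume {x : ℝ × ℝ | x ∈ Icc ((0 : ℝ), (0 : ℝ)) (1, 1) ∧
    (x.1 - 1 / 2) * c + (x.2 - 1 / 2) * s ≤ t}).toReal

theorem squareCutArea_eq_integral {c s t : ℝ} (hc : 0 < c) :
    squareCutArea c s t = ∫ y in (0 : ℝ)..1, unitClamp ((t + (c + s) / 2 - s * y) / c) := by
  set S := {x : ℝ × ℝ | x ∈ Icc ((0 : ℝ), (0 : ℝ)) (1, 1) ∧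
    (x.1 - 1 / 2) * c + (x.2 - 1 / 2) * s ≤ t}
  set w : ℝ → ℝ := fun y => (t + (c + s) / 2 - s * y) / c
  have hS : MeasurableSet S := measurableSet_Icc.inter <|
    measurableSet_le (f := fun x : ℝ × ℝ => (x.1 - 1 / 2) * c + (x.2 - 1 / 2) * s)
      (by fun_prop) measurable_const
  have hslice : ∀ y, volume ((fun x => (x, y)) ⁻¹' S) =
      (Icc (0 : ℝ) 1).indicator (fun y => ENNReal.ofReal (unitClamp (w y))) y := by
    intro y
    by_cases hy : y ∈ Icc (0 : ℝ) 1
    · have : (fun x => (x, y)) ⁻¹' S = Icc 0 (min 1 (w y)) := by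
        ext x
        simp only [S, w, mem_preimage, mem_ofPred_eq, mem_Icc, Prod.mk_le_mk, le_min_iff,
          le_div_iff₀ hc]
        constructor
        · rintro ⟨⟨⟨hx0, -⟩, hx1, -⟩, hxt⟩
          exact ⟨hx0, hx1, by linarith⟩
        · rintro ⟨hx0, hx1, hxt⟩
          exact ⟨⟨⟨hx0, hy.1⟩, hx1, hy.2⟩, by linarith⟩
      rw [this, indicator_of_mem hy, Real.volume_Icc, sub_zero, unitClamp,
        ENNReal.ofReal_max, ENNReal.ofReal_zero, zero_max]
    · rw [indicator_of_notMem hy]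
      convert measure_empty (μ := volume)
      ext x
      simp only [S, mem_preimage, mem_ofPred_eq, mem_Icc, Prod.mk_le_mk]
      exact iff_of_false (fun h => hy ⟨h.1.1.2, h.1.2.2⟩) id
  have hw : Continuous fun y => unitClamp (w y) := continuous_unitClamp.comp (by fun_prop)
  rw [squareCutArea, Measure.volume_eq_prod, Measure.prod_apply_symm hS, lintegral_congr hslice,
    lintegral_indicator measurableSet_Icc, ← ofReal_integral_eq_lintegral_ofReal
      hw.integrableOn_Icc (Eventually.of_forall fun y => unitClamp_nonneg _),
    ENNReal.toReal_ofReal (setIntegral_nonneg measurableSet_Icc fun y _ => unitClamp_nonneg _),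
    intervalIntegral.integral_of_le zero_le_one, integral_Icc_eq_integral_Ioc]

theorem squareCutArea_strictMonoOn {c s : ℝ} (hc : 0 < c) :
    StrictMonoOn (squareCutArea c s) {t | squareCutArea c s t ∈ Ioo 0 1} := by
  intro t₁ ht₁ t₂ ht₂ hlt
  simp only [mem_ofPred_eq, squareCutArea_eq_integral hc] at ht₁ ht₂ ⊢
  refine integral_unitClamp_lt_integral_unitClamp zero_lt_one (by fun_prop) (by fun_prop)
    (fun y _ => ?_) (by simpa using ht₁.2) ht₂.1
  gcongr

theorem eq_of_squareCutArea_eq {c s t₁ t₂ a : ℝ} (hc : 0 < c) (ha : a ∈ Ioo 0 1)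
    (h₁ : squareCutArea c s t₁ = a) (h₂ : squareCutArea c s t₂ = a) : t₁ = t₂ :=
  (squareCutArea_strictMonoOn hc).injOn (show _ ∈ Ioo 0 1 from h₁ ▸ ha)
    (show _ ∈ Ioo 0 1 from h₂ ▸ ha) (h₁.trans h₂.symm)

theorem squareCutArea_trapezoid {c s a : ℝ} (hc : 0 < c) (hsa : |s| ≤ 2 * a * c)
    (hsa' : |s| ≤ 2 * (1 - a) * c) : squareCutArea c s ((a - 1 / 2) * c) = a := by
  rw [squareCutArea_eq_integral hc]
  have hmem : ∀ y ∈ uIcc (0 : ℝ) 1,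
      unitClamp (((a - 1 / 2) * c + (c + s) / 2 - s * y) / c) =
        ((a - 1 / 2) * c + (c + s) / 2 - s * y) / c := by
    intro y hy
    rw [uIcc_of_le zero_le_one] at hy
    obtain ⟨hs₁, hs₂⟩ := abs_le.1 hsa
    obtain ⟨hs₁', hs₂'⟩ := abs_le.1 hsa'
    refine unitClamp_of_mem_Icc ⟨div_nonneg ?_ hc.le, (div_le_one hc).2 ?_⟩ <;>
      nlinarith [hy.1, hy.2]
  rw [intervalIntegral.integral_congr hmem, integral_sub_mul_div]
  field_simp
  ring

theorem squareCutArea_triangle {c s a : ℝ} (hc : 0 < c) (hs : 0 < s) (hsc : s ≤ c) (ha : a ≤ 1)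
    (hsa : 2 * (1 - a) * c ≤ s) :
    squareCutArea c s ((c + s) / 2 - √(2 * (1 - a) * c * s)) = a := by
  set R := √(2 * (1 - a) * c * s)
  have hR_sq : R ^ 2 = 2 * (1 - a) * c * s := sq_sqrt (by positivity)
  have hR : 0 ≤ R := sqrt_nonneg _
  have hRs : R ≤ s := abs_le_of_sq_le_sq' (by nlinarith) hs.le |>.2
  -- Horizontal slices below height `y₁` are full; above it the cut-off corner triangle begins.
  set y₁ := 1 - R / s
  have hy₁ : s * y₁ = s - R := by simp only [y₁]; field_simp
  have hy₁0 : 0 ≤ y₁ := by simp only [y₁, sub_nonneg]; exact (div_le_one hs).2 hRs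
  have hy₁1 : y₁ ≤ 1 := by simp only [y₁]; linarith [div_nonneg hR hs.le]
  set w : ℝ → ℝ := fun y => ((c + s) / 2 - R + (c + s) / 2 - s * y) / c
  have hw : Continuous fun y => unitClamp (w y) := continuous_unitClamp.comp (by fun_prop)
  have hfull : ∀ y ∈ uIcc 0 y₁, unitClamp (w y) = 1 := by
    intro y hy
    rw [uIcc_of_le hy₁0] at hy
    exact unitClamp_of_one_le <| (le_div_iff₀ hc).2 (by nlinarith [hy.2])
  have hpart : ∀ y ∈ uIcc y₁ 1, unitClamp (w y) = w y := by
    intro y hy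
    rw [uIcc_of_le hy₁1] at hy
    exact unitClamp_of_mem_Icc ⟨div_nonneg (by nlinarith [hy.2]) hc.le,
      (div_le_one hc).2 (by nlinarith [hy.1])⟩
  rw [squareCutArea_eq_integral hc, ← intervalIntegral.integral_add_adjacent_intervals
      (hw.intervalIntegrable 0 y₁) (hw.intervalIntegrable y₁ 1),
    intervalIntegral.integral_congr hfull, intervalIntegral.integral_congr hpart,
    integral_sub_mul_div]
  simp only [intervalIntegral.integral_const, smul_eq_mul, mul_one, sub_zero, y₁]
  field_simp
  linear_combination -hR_sq

theorem le_arctan_iff_sin_le_mul_cos {φ k : ℝ} (hφ : φ ∈ Ioo (-(π / 2)) (π / 2)) :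
    φ ≤ arctan k ↔ sin φ ≤ k * cos φ := by
  conv_lhs => rw [← arctan_tan hφ.1 hφ.2]
  rw [arctan_le_arctan_iff, tan_eq_sin_div_cos, div_le_iff₀ (cos_pos_of_mem_Ioo hφ)]

theorem sin_le_cos_of_le_pi_div_four {φ : ℝ} (h₁ : -(π / 2) < φ) (h₂ : φ ≤ π / 4) :
    sin φ ≤ cos φ := by
  simpa using (le_arctan_iff_sin_le_mul_cos (k := 1) ⟨h₁, by linarith [pi_pos]⟩).1
    (arctan_one ▸ h₂)

theorem squareCutArea_cos_sin_of_le_arctan {a φ : ℝ} (ha : 1 / 2 ≤ a) (h₀ : 0 ≤ φ)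
    (h : φ ≤ arctan (2 * (1 - a))) :
    squareCutArea (cos φ) (sin φ) ((a - 1 / 2) * cos φ) = a := by
  have hφ : φ ∈ Ioo (-(π / 2)) (π / 2) :=
    ⟨by linarith [pi_pos], h.trans_lt (arctan_lt_pi_div_two _)⟩
  have hcos := cos_pos_of_mem_Ioo hφ
  have hsin := sin_nonneg_of_nonneg_of_le_pi h₀ (by linarith [hφ.2, pi_pos])
  have hk := (le_arctan_iff_sin_le_mul_cos hφ).1 h
  exact squareCutArea_trapezoid hcos (by rw [abs_of_nonneg hsin]; nlinarith)
    (by rw [abs_of_nonneg hsin]; linarith)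

theorem squareCutArea_cos_sin_of_arctan_lt {a φ : ℝ} (ha : a ≤ 1)
    (h : arctan (2 * (1 - a)) < φ) (h₁ : φ ≤ π / 4) :
    squareCutArea (cos φ) (sin φ) ((cos φ + sin φ) / 2 - √(2 * (1 - a) * cos φ * sin φ)) = a := by
  have h₀ : 0 < φ := (arctan_nonneg.2 (by linarith)).trans_lt h
  have hφ : φ ∈ Ioo (-(π / 2)) (π / 2) := ⟨by linarith [pi_pos], by linarith [pi_pos]⟩
  have hk := not_le.1 <| mt (le_arctan_iff_sin_le_mul_cos hφ).2 (not_le.2 h)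
  exact squareCutArea_triangle (cos_pos_of_mem_Ioo hφ)
    (sin_pos_of_pos_of_lt_pi h₀ (by linarith [pi_pos]))
    (sin_le_cos_of_le_pi_div_four hφ.1 h₁) ha hk.le

theorem ContinuousAt.if_le_of_eq {β : Type*} [TopologicalSpace β] {f g : ℝ → β} {x₀ x : ℝ}
    (hf : ContinuousAt f x) (hg : ContinuousAt g x) (hfg : f x₀ = g x₀) :
    ContinuousAt (fun y => if y ≤ x₀ then f y else g y) x := by
  rcases lt_trichotomy x x₀ with hlt | rfl | hgt
  · exact hf.congr <| eventually_of_mem (Iio_mem_nhds hlt) fun y hy => (if_pos (le_of_lt hy)).symm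
  · refine continuousAt_iff_continuous_left_right.2
      ⟨hf.continuousWithinAt.congr_of_mem (fun y hy => if_pos hy) self_mem_Iic,
        hg.continuousWithinAt.congr_of_mem (fun y hy => ?_) self_mem_Ici⟩
    split_ifs with hle
    · rw [le_antisymm hle hy, hfg]
    · rfl
  · exact hg.congr <| eventually_of_mem (Ioi_mem_nhds hgt) fun y hy => (if_neg (not_le.2 hy)).symm

theorem HasDerivAt.if_le_of_eq {f g : ℝ → ℝ} {f' : ℝ} {x₀ : ℝ}
    (hf : HasDerivAt f f' x₀) (hg : HasDerivAt g f' x₀) (hfg : f x₀ = g x₀) :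
    HasDerivAt (fun y => if y ≤ x₀ then f y else g y) f' x₀ := by
  have hleft : HasDerivWithinAt (fun y => if y ≤ x₀ then f y else g y) f' (Iic x₀) x₀ :=
    hf.hasDerivWithinAt.congr_of_mem (fun y hy => if_pos hy) self_mem_Iic
  have hright : HasDerivWithinAt (fun y => if y ≤ x₀ then f y else g y) f' (Ici x₀) x₀ := by
    refine hg.hasDerivWithinAt.congr_of_mem (fun y hy => ?_) self_mem_Ici
    split_ifs with hle
    · rw [le_antisymm hle hy, hfg]
    · rfl
  simpa only [Iic_union_Ici, hasDerivWithinAt_univ] using hleft.union hright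

theorem ContDiffAt.if_le_of_deriv_eq {f g : ℝ → ℝ} {x₀ : ℝ}
    (hf : ContDiffAt ℝ 1 f x₀) (hg : ContDiffAt ℝ 1 g x₀) (hfg : f x₀ = g x₀)
    (hfg' : deriv f x₀ = deriv g x₀) :
    ContDiffAt ℝ 1 (fun y => if y ≤ x₀ then f y else g y) x₀ := by
  obtain ⟨w, hw, hw_open, hx₀⟩ :=
    eventually_nhds_iff.1 ((hf.eventually (by simp)).and (hg.eventually (by simp)))
  have hderiv : ∀ x ∈ w, HasDerivAt (fun y => if y ≤ x₀ then f y else g y)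
      (if x ≤ x₀ then deriv f x else deriv g x) x := by
    intro x hx
    have hfx := ((hw x hx).1.differentiableAt one_ne_zero).hasDerivAt
    have hgx := ((hw x hx).2.differentiableAt one_ne_zero).hasDerivAt
    rcases lt_trichotomy x x₀ with hlt | rfl | hgt
    · rw [if_pos hlt.le]
      exact hfx.congr_of_eventuallyEq <|
        eventually_of_mem (Iio_mem_nhds hlt) fun y hy => if_pos (le_of_lt hy)
    · rw [if_pos le_rfl]
      exact hfx.if_le_of_eq (hfg' ▸ hgx) hfg
    · rw [if_neg (not_le.2 hgt)]
      exact hgx.congr_of_eventuallyEq <|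
        eventually_of_mem (Ioi_mem_nhds hgt) fun y hy => if_neg (not_le.2 hy)
  have hcont : ContinuousOn (fun x => if x ≤ x₀ then deriv f x else deriv g x) w :=
    fun x hx => (((hw x hx).1.derivWithin (m := 0) le_rfl).continuousAt.if_le_of_eq
      ((hw x hx).2.derivWithin (m := 0) le_rfl).continuousAt hfg').continuousWithinAt
  refine ContDiffOn.contDiffAt ?_ (hw_open.mem_nhds hx₀)
  exact (contDiffOn_succ_iff_deriv_of_isOpen (n := 0) hw_open).2
    ⟨fun x hx => (hderiv x hx).differentiableAt.differentiableWithinAt, by simp,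
      contDiffOn_zero.2 (hcont.congr fun x hx => (hderiv x hx).deriv)⟩

theorem sin_arctan_eq_mul_cos_arctan (k : ℝ) : sin (arctan k) = k * cos (arctan k) := by
  rw [sin_arctan, cos_arctan]
  ring

noncomputable def cutDistance (a φ : ℝ) : ℝ :=
  if φ ≤ arctan (2 * (1 - a)) then (a - 1 / 2) * cos φ
  else (sin φ + cos φ) / 2 - √(2 * (1 - a) * cos φ * sin φ)

theorem contDiffAt_cutDistance {a : ℝ} (ha : a < 1) :
    ContDiffAt ℝ 1 (cutDistance a) (arctan (2 * (1 - a))) := by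
  set φ' := arctan (2 * (1 - a))
  have hsin : 0 < sin φ' := sin_arctan_pos.2 (by linarith)
  have hφ' : 2 * (1 - a) * cos φ' = sin φ' := (sin_arctan_eq_mul_cos_arctan _).symm
  have hsqrt : √(2 * (1 - a) * cos φ' * sin φ') = sin φ' := by
    rw [hφ', sqrt_mul_self hsin.le]
  have hne : 2 * (1 - a) * cos φ' * sin φ' ≠ 0 := by rw [hφ']; positivity
  have hf : HasDerivAt (fun φ => (a - 1 / 2) * cos φ) (-(a - 1 / 2) * sin φ') φ' :=
    ((hasDerivAt_cos φ').const_mul _).congr_deriv (by ring)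
  have hg : HasDerivAt (fun φ => (sin φ + cos φ) / 2 - √(2 * (1 - a) * cos φ * sin φ))
      ((cos φ' - sin φ') / 2 - 2 * (1 - a) * (cos φ' ^ 2 - sin φ' ^ 2) / (2 * sin φ')) φ' := by
    refine ((((hasDerivAt_sin φ').add (hasDerivAt_cos φ')).div_const 2).sub
      ((((hasDerivAt_cos φ').const_mul _).mul (hasDerivAt_sin φ')).sqrt hne)).congr_deriv ?_
    rw [Pi.mul_apply, hsqrt]
    ring
  refine ContDiffAt.if_le_of_deriv_eq (by fun_prop)
    ((by fun_prop : ContDiffAt ℝ 1 (fun φ => (sin φ + cos φ) / 2) φ').sub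
      (ContDiffAt.sqrt (by fun_prop) hne)) ?_ ?_
  · rw [hsqrt]
    linear_combination -hφ' / 2
  · have h1a : 1 - a ≠ 0 := by linarith
    rw [hf.deriv, hg.deriv, ← hφ']
    field_simp
    ring

theorem stmt5 (a : ℝ) (ha : 1 / 2 < a) (ha1 : a < 1) (sStar : ℝ → ℝ)
    (hcon : ∀ φ ∈ Set.Icc (0 : ℝ) (π / 4),
      (volume {x : ℝ × ℝ | x ∈ Set.Icc ((0 : ℝ), (0 : ℝ)) (1, 1) ∧
        (x.1 - 1 / 2) * Real.cos φ + (x.2 - 1 / 2) * Real.sin φ ≤ sStar φ}).toReal = a) :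
    let φ' := Real.arctan (2 * (1 - a))
    (∀ φ ∈ Set.Icc (0 : ℝ) φ', sStar φ = (a - 1 / 2) * Real.cos φ) ∧
      (∀ φ ∈ Set.Ioc φ' (π / 4),
        sStar φ = (Real.sin φ + Real.cos φ) / 2 -
          Real.sqrt (2 * (1 - a) * Real.cos φ * Real.sin φ)) ∧
      ContDiffAt ℝ 1 sStar φ' := by
  intro φ'
  have hφ' : φ' ∈ Ioo 0 (π / 4) :=
    ⟨arctan_pos.2 (by linarith), arctan_one ▸ arctan_strictMono (by linarith)⟩
  have hsStar {φ} (hφ : φ ∈ Icc 0 (π / 4)) {t} (ht : squareCutArea (cos φ) (sin φ) t = a) :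
      sStar φ = t :=
    eq_of_squareCutArea_eq
      (cos_pos_of_mem_Ioo ⟨by linarith [hφ.1, pi_pos], by linarith [hφ.2, pi_pos]⟩)
      ⟨by linarith, ha1⟩ (hcon φ hφ) ht
  have htrapezoid : ∀ φ ∈ Icc 0 φ', sStar φ = (a - 1 / 2) * cos φ := fun φ hφ =>
    hsStar ⟨hφ.1, hφ.2.trans hφ'.2.le⟩ (squareCutArea_cos_sin_of_le_arctan ha.le hφ.1 hφ.2)
  have htriangle : ∀ φ ∈ Ioc φ' (π / 4),
      sStar φ = (sin φ + cos φ) / 2 - √(2 * (1 - a) * cos φ * sin φ) := fun φ hφ => by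
    rw [add_comm]
    exact hsStar ⟨hφ'.1.le.trans hφ.1.le, hφ.2⟩
      (squareCutArea_cos_sin_of_arctan_lt ha1.le hφ.1 hφ.2)
  refine ⟨htrapezoid, htriangle, (contDiffAt_cutDistance ha1).congr_of_eventuallyEq ?_⟩
  filter_upwards [Ioo_mem_nhds hφ'.1 hφ'.2] with φ hφ
  unfold cutDistance
  split_ifs with h
  exacts [htrapezoid φ ⟨hφ.1.le, h⟩, htriangle φ ⟨not_le.1 h, hφ.2.le⟩]
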